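/- In any interval [u, v] of NC_W(γ), the reflections appearing as coordinates of the label of a single maximal chain under the natural edge labeling are pairwise distinct. -/

import Mathlib

open scoped RealInnerProductSpace
open Module

noncomputable section

variable {V : Type*} [NormedAddCommGroup V] [InnerProductSpace ℝ V]

/-- `g` acts as the orthogonal reflection in the hyperplane orthogonal to `α`. -/
def reflFormula (α : V) (g : V ≃ₗᵢ[ℝ] V) : Prop :=
  ∀ v, g v = v - (2 * ⟪α, v⟫ / ⟪α, α⟫) • α

/-- `g` is an orthogonal reflection. -/
def IsReflection (g : V ≃ₗᵢ[ℝ] V) : Prop :=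
  ∃ α : V, α ≠ 0 ∧ reflFormula α g

/-- A finite real reflection group: a finite subgroup of the orthogonal group
generated by its reflections. -/
def IsReflectionGroup (W : Subgroup (V ≃ₗᵢ[ℝ] V)) : Prop :=
  Finite W ∧ Subgroup.closure {g | g ∈ W ∧ IsReflection g} = W

/-- Reflection length: the least `k` such that `w` is a product of `k` reflections. -/
def refLen (W : Subgroup (V ≃ₗᵢ[ℝ] V)) (w : W) : ℕ :=
  sInf {k | ∃ l : List W, l.length = k ∧ (∀ t ∈ l, IsReflection (t : W).1) ∧ l.prod = w}

/-- The absolute order on `W`. -/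
def absLe (W : Subgroup (V ≃ₗᵢ[ℝ] V)) (u v : W) : Prop :=
  refLen W u + refLen W (u⁻¹ * v) = refLen W v

/-- Covering relation of the absolute order. -/
def covers (W : Subgroup (V ≃ₗᵢ[ℝ] V)) (u v : W) : Prop :=
  absLe W u v ∧ u ≠ v ∧ ∀ z, absLe W u z → absLe W z v → z = u ∨ z = v

/-- The fixed subspace of an isometry. -/
def fixedSpace (g : V ≃ₗᵢ[ℝ] V) : Submodule ℝ V where
  carrier := {v | g v = v}
  add_mem' := by
    intro a b ha hb
    simp only [Set.mem_setOf_eq, map_add] at *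
    rw [ha, hb]
  zero_mem' := by simp
  smul_mem' := by
    intro c a ha
    simp only [Set.mem_setOf_eq, map_smul] at *
    rw [ha]

/-- A root system for the reflection group `W`. -/
def IsRootSystemFor (W : Subgroup (V ≃ₗᵢ[ℝ] V)) (Φ : Set V) : Prop :=
  Φ.Finite ∧ (∀ α ∈ Φ, α ≠ 0) ∧ (∀ α ∈ Φ, -α ∈ Φ) ∧
  (∀ α ∈ Φ, ∀ c : ℝ, c • α ∈ Φ → c = 1 ∨ c = -1) ∧
  (∀ α ∈ Φ, ∃ t ∈ W, reflFormula α t) ∧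
  (∀ t ∈ W, IsReflection t → ∃ α ∈ Φ, reflFormula α t) ∧
  (∀ g ∈ W, ∀ α ∈ Φ, g α ∈ Φ)

/-- A simple system for `Φ`: roots `σ 1, …, σ ℓ` which are linearly independent and
such that every root is a nonnegative or nonpositive combination of them. -/
def IsSimpleSystem (Φ : Set V) {ℓ : ℕ} (σ : Fin ℓ → V) : Prop :=
  (∀ i, σ i ∈ Φ) ∧ LinearIndependent ℝ σ ∧
  ∀ α ∈ Φ, (∃ c : Fin ℓ → ℝ, (∀ i, 0 ≤ c i) ∧ α = ∑ i, c i • σ i) ∨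
           (∃ c : Fin ℓ → ℝ, (∀ i, 0 ≤ c i) ∧ -α = ∑ i, c i • σ i)

/-- `γ` is a Coxeter element of `W`: a product, in some order, of the reflections in
the `ℓ` simple roots of some simple system of the root system `Φ`. -/
def IsCoxeterElement (W : Subgroup (V ≃ₗᵢ[ℝ] V)) (Φ : Set V) (ℓ : ℕ) (γ : W) : Prop :=
  ∃ σ : Fin ℓ → V, IsSimpleSystem Φ σ ∧
    ∃ t : Fin ℓ → W, (∀ i, reflFormula (σ i) (t i).1) ∧
      ∃ l : List (Fin ℓ), l.Nodup ∧ (∀ i, i ∈ l) ∧ (l.map t).prod = γ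

/-- `l` is a maximal (saturated) chain from `u` to `v` in the absolute order. -/
def IsMaximalChain (W : Subgroup (V ≃ₗᵢ[ℝ] V)) (u v : W) (l : List W) : Prop :=
  l.head? = some u ∧ l.getLast? = some v ∧ l.Chain' (covers W)

/-- The label of a chain under the natural edge labeling `λ (x, y) = x⁻¹ * y`. -/
def chainLabels (W : Subgroup (V ≃ₗᵢ[ℝ] V)) (l : List W) : List W :=
  l.zipWith (fun x y => x⁻¹ * y) l.tail

end

/-!
Each covering step `x ⋖ y` of the absolute order multiplies by a reflection: otherwise the first
letter `t` of a minimal reflection word for `x⁻¹ * y` would give an element `x * t` strictly between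
`x` and `y`. Since each step also raises reflection length, the labels of a maximal chain from `u`
to `v` form a reflection word for `u⁻¹ * v` of length at most `refLen v - refLen u ≤ refLen (u⁻¹ * v)`,
i.e. a reduced word. A reduced reflection word cannot contain a reflection `t` twice: replacing a
subword `t B t` by the conjugates `t b t⁻¹` of the letters `b` of `B` keeps the product, and
conjugates of reflections are reflections, so the word would shorten by two letters.
-/

namespace IsReflection

variable {V : Type*} [NormedAddCommGroup V] [InnerProductSpace ℝ V] {g : V ≃ₗᵢ[ℝ] V}

lemma mul_self (h : IsReflection g) : g * g = 1 := by
  obtain ⟨α, hα, hg⟩ := h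
  have hαα : ⟪α, α⟫ ≠ 0 := by simpa using hα
  ext v
  have h_inner : ⟪α, g v⟫ = -⟪α, v⟫ := by
    rw [hg v, inner_sub_right, real_inner_smul_right]
    field_simp
    ring
  show g (g v) = v
  rw [hg (g v), h_inner, hg v]
  module

lemma inv_eq (h : IsReflection g) : g⁻¹ = g :=
  inv_eq_of_mul_eq_one_right h.mul_self

lemma ne_one (h : IsReflection g) : g ≠ 1 := by
  obtain ⟨α, hα, hg⟩ := h
  have hαα : ⟪α, α⟫ ≠ 0 := by simpa using hα
  intro hone
  have hfix : α - (2 * ⟪α, α⟫ / ⟪α, α⟫) • α = α := by rw [← hg α, hone]; rfl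
  rw [mul_div_assoc, div_self hαα, sub_eq_self] at hfix
  exact hα (by simpa using hfix)

lemma conj (h : IsReflection g) (k : V ≃ₗᵢ[ℝ] V) : IsReflection (k * g * k⁻¹) := by
  obtain ⟨α, hα, hg⟩ := h
  refine ⟨k α, by simpa using hα, fun v => ?_⟩
  have h_inner : ⟪α, k⁻¹ v⟫ = ⟪k α, v⟫ := by
    rw [← k.inner_map_map α (k⁻¹ v)]
    simp
  show k (g (k⁻¹ v)) = _
  rw [hg, map_sub, map_smul, h_inner, k.inner_map_map]
  simp

end IsReflection

section ReflectionLength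

variable {V : Type*} [NormedAddCommGroup V] [InnerProductSpace ℝ V]
  {W : Subgroup (V ≃ₗᵢ[ℝ] V)}

variable (W) in
def IsGeneratedByReflections : Prop :=
  Subgroup.closure {g | g ∈ W ∧ IsReflection g} = W

lemma mul_self_eq_one_of_isReflection {t : W} (ht : IsReflection (t : V ≃ₗᵢ[ℝ] V)) :
    t * t = 1 :=
  Subtype.ext ht.mul_self

lemma inv_eq_self_of_isReflection {t : W} (ht : IsReflection (t : V ≃ₗᵢ[ℝ] V)) : t⁻¹ = t :=
  inv_eq_of_mul_eq_one_right (mul_self_eq_one_of_isReflection ht)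

lemma ne_one_of_isReflection {t : W} (ht : IsReflection (t : V ≃ₗᵢ[ℝ] V)) : t ≠ 1 :=
  fun h => ht.ne_one (by rw [h]; rfl)

lemma exists_reflection_word (hgen : IsGeneratedByReflections W) (w : W) :
    ∃ l : List W, (∀ t ∈ l, IsReflection (t : V ≃ₗᵢ[ℝ] V)) ∧ l.prod = w := by
  set S : Set (V ≃ₗᵢ[ℝ] V) := {g | g ∈ W ∧ IsReflection g}
  have hw : (w : V ≃ₗᵢ[ℝ] V) ∈ Submonoid.closure (S ∪ S⁻¹) := by
    rw [← Subgroup.closure_toSubmonoid, show _ = W from hgen]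
    exact w.2
  obtain ⟨l, hl, hprod⟩ := Submonoid.exists_list_of_mem_closure hw
  have hlS : ∀ g ∈ l, g ∈ S := fun g hg => by
    rcases hl g hg with h | h
    · exact h
    · have hg_inv : g = g⁻¹ := by simpa using h.2.inv_eq
      rwa [hg_inv]
  lift l to List W using fun g hg => (hlS g hg).1
  refine ⟨l, fun t ht => (hlS t (List.mem_map_of_mem ht)).2, Subtype.ext ?_⟩
  rwa [Subgroup.val_list_prod]

lemma refLen_prod_le_length {l : List W} (hl : ∀ t ∈ l, IsReflection (t : V ≃ₗᵢ[ℝ] V)) :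
    refLen W l.prod ≤ l.length :=
  Nat.sInf_le ⟨l, rfl, hl, rfl⟩

lemma refLen_one : refLen W 1 = 0 :=
  Nat.le_zero.mp (refLen_prod_le_length (l := []) (by simp))

lemma exists_word_length_eq_refLen (hgen : IsGeneratedByReflections W) (w : W) :
    ∃ l : List W, (∀ t ∈ l, IsReflection (t : V ≃ₗᵢ[ℝ] V)) ∧ l.prod = w ∧
      l.length = refLen W w := by
  obtain ⟨l, hl, hprod⟩ := exists_reflection_word hgen w
  have h_nonempty : {k | ∃ l : List W, l.length = k ∧
      (∀ t ∈ l, IsReflection (t : V ≃ₗᵢ[ℝ] V)) ∧ l.prod = w}.Nonempty :=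
    ⟨l.length, l, rfl, hl, hprod⟩
  obtain ⟨l', hlen, hl', hprod'⟩ := Nat.sInf_mem h_nonempty
  exact ⟨l', hl', hprod', hlen⟩

lemma refLen_mul_le (hgen : IsGeneratedByReflections W) (a b : W) :
    refLen W (a * b) ≤ refLen W a + refLen W b := by
  obtain ⟨la, hla, rfl, hlena⟩ := exists_word_length_eq_refLen hgen a
  obtain ⟨lb, hlb, rfl, hlenb⟩ := exists_word_length_eq_refLen hgen b
  rw [← hlena, ← hlenb, ← List.length_append, ← List.prod_append]
  exact refLen_prod_le_length (by simpa [or_imp, forall_and] using And.intro hla hlb)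

lemma refLen_eq_zero_iff (hgen : IsGeneratedByReflections W) {w : W} :
    refLen W w = 0 ↔ w = 1 := by
  refine ⟨fun h => ?_, fun h => h ▸ refLen_one⟩
  obtain ⟨l, -, rfl, hlen⟩ := exists_word_length_eq_refLen hgen w
  rw [List.length_eq_zero_iff.mp (hlen.trans h), List.prod_nil]

variable (W) in
def IsReducedWord (l : List W) : Prop :=
  (∀ t ∈ l, IsReflection (t : V ≃ₗᵢ[ℝ] V)) ∧ refLen W l.prod = l.length

lemma IsReducedWord.append (hgen : IsGeneratedByReflections W)
    {l₁ l₂ : List W} (h : IsReducedWord W (l₁ ++ l₂)) :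
    IsReducedWord W l₁ ∧ IsReducedWord W l₂ ∧
      refLen W l₁.prod + refLen W l₂.prod = refLen W (l₁ ++ l₂).prod := by
  obtain ⟨hrefl, hlen⟩ := h
  simp only [List.mem_append, or_imp, forall_and] at hrefl
  have h₁ := refLen_prod_le_length hrefl.1
  have h₂ := refLen_prod_le_length hrefl.2
  have h_sub := refLen_mul_le hgen l₁.prod l₂.prod
  rw [List.prod_append, List.length_append] at *
  exact ⟨⟨hrefl.1, by omega⟩, ⟨hrefl.2, by omega⟩, by omega⟩

lemma IsReducedWord.nodup (hgen : IsGeneratedByReflections W)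
    {l : List W} (h : IsReducedWord W l) : l.Nodup := by
  induction l with
  | nil => exact List.nodup_nil
  | cons t L ih =>
    obtain ⟨⟨ht, -⟩, hL, -⟩ := IsReducedWord.append (l₁ := [t]) hgen h
    replace ht : IsReflection (t : V ≃ₗᵢ[ℝ] V) := ht t (List.mem_singleton_self t)
    refine List.nodup_cons.mpr ⟨fun htL => ?_, ih hL⟩
    obtain ⟨B, C, rfl⟩ := List.append_of_mem htL
    have hprod : (B.map (fun s => t * s * t⁻¹) ++ C).prod = (t :: (B ++ t :: C)).prod := by
      have hconj : (B.map (fun s => t * s * t⁻¹)).prod = t * B.prod * t⁻¹ :=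
        (map_list_prod (MulAut.conj t) B).symm
      rw [List.prod_append, hconj, List.prod_cons, List.prod_append, List.prod_cons,
        inv_eq_self_of_isReflection ht]
      simp only [mul_assoc]
    have hrefl : ∀ s ∈ B.map (fun s => t * s * t⁻¹) ++ C, IsReflection (s : V ≃ₗᵢ[ℝ] V) := by
      simp only [List.mem_append, List.mem_map]
      rintro s (⟨b, hb, rfl⟩ | hs)
      · simpa using (h.1 b (by simp [hb])).conj t
      · exact h.1 s (by simp [hs])
    have := refLen_prod_le_length hrefl
    rw [hprod, h.2] at this
    simp at this

lemma absLe_mul_of_refLen_add_eq (hgen : IsGeneratedByReflections W)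
    {x y a b : W} (hxy : absLe W x y) (hab : x⁻¹ * y = a * b)
    (hlen : refLen W a + refLen W b = refLen W (x⁻¹ * y)) :
    absLe W x (x * a) ∧ absLe W (x * a) y := by
  have hb : (x * a)⁻¹ * y = b := by rw [mul_inv_rev, mul_assoc, hab, inv_mul_cancel_left]
  have h_lower := refLen_mul_le hgen x a
  have h_upper := refLen_mul_le hgen (x * a) b
  have hy : x * a * b = y := by rw [mul_assoc, ← hab, mul_inv_cancel_left]
  rw [hy] at h_upper
  unfold absLe at hxy ⊢
  rw [inv_mul_cancel_left, hb]
  omega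

lemma isReflection_inv_mul_of_covers (hgen : IsGeneratedByReflections W)
    {x y : W} (h : covers W x y) : IsReflection ((x⁻¹ * y : W) : V ≃ₗᵢ[ℝ] V) := by
  obtain ⟨hxy, hne, hmax⟩ := h
  obtain ⟨l, hrefl, hprod, hlen⟩ := exists_word_length_eq_refLen hgen (x⁻¹ * y)
  cases l with
  | nil => exact absurd (inv_mul_eq_one.mp hprod.symm) hne
  | cons t rest =>
    have ht : IsReflection (t : V ≃ₗᵢ[ℝ] V) := hrefl t List.mem_cons_self
    obtain ⟨-, -, hsplit⟩ := IsReducedWord.append (l₁ := [t]) hgen ⟨hrefl, hprod ▸ hlen.symm⟩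
    simp only [List.prod_singleton, List.singleton_append, hprod] at hsplit
    obtain ⟨hxz, hzy⟩ := absLe_mul_of_refLen_add_eq hgen hxy hprod.symm hsplit
    rcases hmax (x * t) hxz hzy with hz | hz
    · exact absurd (mul_eq_left.mp hz) (ne_one_of_isReflection ht)
    · rwa [← hz, inv_mul_cancel_left]

lemma refLen_lt_of_covers (hgen : IsGeneratedByReflections W)
    {x y : W} (h : covers W x y) : refLen W x < refLen W y := by
  obtain ⟨hxy, hne, -⟩ := h
  have : refLen W (x⁻¹ * y) ≠ 0 := fun h0 =>
    hne (inv_mul_eq_one.mp ((refLen_eq_zero_iff hgen).mp h0))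
  unfold absLe at hxy
  omega

lemma IsMaximalChain.cons_cons {u v x y : W} {l : List W}
    (h : IsMaximalChain W u v (x :: y :: l)) :
    x = u ∧ covers W x y ∧ IsMaximalChain W y v (y :: l) := by
  obtain ⟨hhead, hlast, hchain⟩ := h
  rw [List.getLast?_cons_cons] at hlast
  rw [List.Chain', List.isChain_cons_cons] at hchain
  exact ⟨Option.some_injective _ hhead, hchain.1, rfl, hlast, hchain.2⟩

lemma IsMaximalChain.chainLabels_isReflection_prod_length (hgen : IsGeneratedByReflections W)
    {u v : W} {l : List W} (h : IsMaximalChain W u v l) :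
    (∀ t ∈ chainLabels W l, IsReflection (t : V ≃ₗᵢ[ℝ] V)) ∧
      (chainLabels W l).prod = u⁻¹ * v ∧
      refLen W u + (chainLabels W l).length ≤ refLen W v := by
  induction l generalizing u with
  | nil => simp [IsMaximalChain] at h
  | cons x l ih =>
    cases l with
    | nil =>
      obtain ⟨hu, hv, -⟩ := h
      cases Option.some_injective _ hu
      cases Option.some_injective _ hv
      simp [chainLabels]
    | cons y l =>
      obtain ⟨rfl, hxy, hrest⟩ := h.cons_cons
      obtain ⟨hrefl, hprod, hlen⟩ := ih hrest
      have hcons : chainLabels W (x :: y :: l) = (x⁻¹ * y) :: chainLabels W (y :: l) := rfl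
      refine ⟨?_, ?_, ?_⟩
      · rw [hcons, List.forall_mem_cons]
        exact ⟨isReflection_inv_mul_of_covers hgen hxy, hrefl⟩
      · rw [hcons, List.prod_cons, hprod, mul_assoc, mul_inv_cancel_left]
      · have := refLen_lt_of_covers hgen hxy
        rw [hcons, List.length_cons]
        omega

lemma IsMaximalChain.isReducedWord_chainLabels (hgen : IsGeneratedByReflections W)
    {u v : W} {l : List W} (h : IsMaximalChain W u v l) : IsReducedWord W (chainLabels W l) := by
  obtain ⟨hrefl, hprod, hlen⟩ := h.chainLabels_isReflection_prod_length hgen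
  have h_upper := refLen_prod_le_length hrefl
  have h_lower := refLen_mul_le hgen u (u⁻¹ * v)
  rw [mul_inv_cancel_left] at h_lower
  refine ⟨hrefl, ?_⟩
  rw [hprod] at h_upper ⊢
  omega

end ReflectionLength

theorem statement8_general {V : Type*} [NormedAddCommGroup V] [InnerProductSpace ℝ V]
    (W : Subgroup (V ≃ₗᵢ[ℝ] V)) (hW : IsReflectionGroup W)
    (u v : W)
    (l : List W) (hl : IsMaximalChain W u v l) :
    (chainLabels W l).Nodup :=
  (hl.isReducedWord_chainLabels hW.2).nodup hW.2

/-- The reflections appearing as coordinates of the label of a single maximal chain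
of an interval `[u, v]` of `NC_W(γ)` under the natural edge labeling are pairwise
distinct. -/
theorem statement8 {V : Type*} [NormedAddCommGroup V] [InnerProductSpace ℝ V]
    [FiniteDimensional ℝ V]
    (W : Subgroup (V ≃ₗᵢ[ℝ] V)) (hW : IsReflectionGroup W)
    (Φ : Set V) (hΦ : IsRootSystemFor W Φ)
    (γ : W) (hγ : IsCoxeterElement W Φ (Module.finrank ℝ V) γ)
    (u v : W) (huv : absLe W u v) (hvγ : absLe W v γ)
    (l : List W) (hl : IsMaximalChain W u v l) :
    (chainLabels W l).Nodup :=
  statement8_general W hW u v l hl
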